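/- Let k ≥ 2 and t ≥ 2k−3 be integers, and let G be the graph obtained from the complete graph K_k by adding t new vertices, each adjacent to all vertices of K_k (and to no other new vertex). Then G is k-degenerate, and G admits no partition of its vertex set into k−1 parts such that each part induces a forest and any two parts differ in size by at most one. -/

import Mathlib

/-!
By pigeonhole two vertices `a, b` of `K_k` fall into the same one of the `k - 1` classes.
Every other vertex is adjacent to both, so it would close a triangle with them: that class
is `{a, b}`. Equitability then caps every class at three vertices, giving
`k + t ≤ 2 + 3 (k - 2) < k + t`. Degeneracy is immediate: a new vertex sees only `K_k`,
and a set without new vertices has at most `k` elements.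
-/

/-- The graph obtained from `K_k` by adding `t` new vertices, each adjacent to all vertices
of `K_k` and to no other new vertex. -/
def completePlusDominating (k t : ℕ) : SimpleGraph (Fin k ⊕ Fin t) where
  Adj u v :=
    match u, v with
    | Sum.inl a, Sum.inl b => a ≠ b
    | Sum.inl _, Sum.inr _ => True
    | Sum.inr _, Sum.inl _ => True
    | Sum.inr _, Sum.inr _ => False
  symm := by
    refine ⟨fun u v h => ?_⟩
    cases u <;> cases v <;> simp_all <;> exact fun e => h e.symm
  loopless := by
    refine ⟨fun u => ?_⟩
    cases u <;> simp

open Finset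

lemma Finset.card_le_card_add_card_toRight {α β : Type*} [Fintype α] (u : Finset (α ⊕ β)) :
    #u ≤ Fintype.card α + #u.toRight := by
  rw [← card_toLeft_add_card_toRight]
  exact Nat.add_le_add_right (card_le_univ _) _

lemma Finset.sum_card_eq_card_of_existsUnique_mem {ι V : Type*} [Fintype ι] [Fintype V]
    (P : ι → Finset V) (hP : ∀ v, ∃! i, v ∈ P i) : ∑ i, #(P i) = Fintype.card V := by
  classical
  choose cls hcls using hP
  have hP_eq (i : ι) : P i = ({v | cls v = i} : Finset V) := by
    ext v
    rw [mem_filter_univ]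
    exact ⟨fun hv => ((hcls v).2 i hv).symm, fun hv => hv ▸ (hcls v).1⟩
  simp_rw [hP_eq]
  exact (card_eq_sum_card_fiberwise fun v _ => mem_univ (cls v)).symm

lemma Finset.sum_add_one_le_card_mul_of_le_add_one {ι : Type*} [Fintype ι] [DecidableEq ι]
    (f : ι → ℕ) (hf : ∀ i j, f i ≤ f j + 1) (i₀ : ι) :
    ∑ i, f i + 1 ≤ Fintype.card ι * (f i₀ + 1) := by
  have hrest : ∑ i ∈ univ.erase i₀, f i ≤ (Fintype.card ι - 1) * (f i₀ + 1) := by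
    simpa [card_erase_of_mem (mem_univ i₀)] using
      sum_le_card_nsmul (univ.erase i₀) f (f i₀ + 1) fun i _ => hf i i₀
  have hpos : 0 < Fintype.card ι := Fintype.card_pos_iff.2 ⟨i₀⟩
  rw [← sum_erase_add _ _ (mem_univ i₀)]
  calc ∑ i ∈ univ.erase i₀, f i + f i₀ + 1
      ≤ (Fintype.card ι - 1) * (f i₀ + 1) + (f i₀ + 1) := by omega
    _ = Fintype.card ι * (f i₀ + 1) := by
      rw [← Nat.succ_mul, Nat.succ_eq_add_one, Nat.sub_add_cancel hpos]

lemma SimpleGraph.subset_pair_of_isAcyclic_induce {V : Type*} [DecidableEq V]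
    {G : SimpleGraph V} {S : Finset V} (hS : (G.induce (S : Set V)).IsAcyclic) {a b : V}
    (ha : a ∈ S) (hb : b ∈ S) (hab : G.Adj a b)
    (hdom : ∀ c, c ≠ a → c ≠ b → G.Adj a c ∧ G.Adj b c) : S ⊆ {a, b} := by
  intro c hc
  by_contra hcab
  simp only [mem_insert, mem_singleton, not_or] at hcab
  obtain ⟨hac, hbc⟩ := hdom c hcab.1 hcab.2
  refine hS.cliqueFree le_rfl {⟨a, ha⟩, ⟨b, hb⟩, ⟨c, hc⟩} ?_
  rw [SimpleGraph.is3Clique_triple_iff]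
  exact ⟨hab, hac, hbc⟩

namespace completePlusDominating

variable {k t : ℕ}

lemma adj_inl_iff {a : Fin k} {v : Fin k ⊕ Fin t} :
    (completePlusDominating k t).Adj (.inl a) v ↔ v ≠ .inl a := by
  cases v <;> simp [completePlusDominating, eq_comm]

lemma not_adj_inr_inr {b c : Fin t} : ¬(completePlusDominating k t).Adj (.inr b) (.inr c) := by
  simp [completePlusDominating]

lemma exists_card_neighbors_le [DecidableRel (completePlusDominating k t).Adj]
    (s : Finset (Fin k ⊕ Fin t)) (hs : s.Nonempty) :
    ∃ v ∈ s, #{u ∈ s | (completePlusDominating k t).Adj v u} ≤ k := by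
  suffices ∃ v ∈ s, ∀ c, .inr c ∈ s → ¬(completePlusDominating k t).Adj v (.inr c) by
    obtain ⟨v, hv, hnot⟩ := this
    refine ⟨v, hv, ?_⟩
    have hright : {u ∈ s | (completePlusDominating k t).Adj v u}.toRight = ∅ := by
      ext c
      simpa using hnot c
    simpa [hright] using
      card_le_card_add_card_toRight {u ∈ s | (completePlusDominating k t).Adj v u}
  by_cases hr : s.toRight.Nonempty
  · obtain ⟨b, hb⟩ := hr
    exact ⟨.inr b, mem_toRight.1 hb, fun c _ => not_adj_inr_inr⟩
  · obtain ⟨v, hv⟩ := hs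
    exact ⟨v, hv, fun c hc => absurd ⟨c, mem_toRight.2 hc⟩ hr⟩

end completePlusDominating

open Finset Classical in
/-- For k ≥ 2 and t ≥ 2k−3, the graph obtained from K_k by adding t vertices each adjacent
to all of K_k is k-degenerate, but has no equitable partition into k−1 induced forests. -/
theorem completePlusDominating_k_degenerate_not_equitable (k t : ℕ)
    (hk : 2 ≤ k) (ht : 2 * k - 3 ≤ t) :
    (∀ s : Finset (Fin k ⊕ Fin t), s.Nonempty →
      ∃ v ∈ s, (s.filter (fun u => (completePlusDominating k t).Adj v u)).card ≤ k) ∧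
    ¬ ∃ P : Fin (k - 1) → Finset (Fin k ⊕ Fin t),
        (∀ v, ∃! i, v ∈ P i) ∧
        (∀ i, ((completePlusDominating k t).induce (↑(P i) : Set (Fin k ⊕ Fin t))).IsAcyclic) ∧
        (∀ i j, ((P i).card : ℤ) - (P j).card ≤ 1) := by
  refine ⟨completePlusDominating.exists_card_neighbors_le, ?_⟩
  rintro ⟨P, hP, hacyclic, hequitable⟩
  choose cls hcls using fun v => (hP v).exists
  obtain ⟨a, b, hab, hsame⟩ :=
    Fintype.exists_ne_map_eq_of_card_lt (fun a : Fin k => cls (.inl a))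
      (by simp only [Fintype.card_fin]; omega)
  have hsmall : #(P (cls (.inl a))) ≤ 2 := by
    refine (card_le_card (SimpleGraph.subset_pair_of_isAcyclic_induce (hacyclic _)
      (hcls _) (hsame ▸ hcls (.inl b)) ?_ ?_)).trans card_le_two
    · simpa [completePlusDominating.adj_inl_iff] using hab.symm
    · exact fun c hca hcb =>
        ⟨completePlusDominating.adj_inl_iff.2 hca, completePlusDominating.adj_inl_iff.2 hcb⟩
  have hbound := sum_add_one_le_card_mul_of_le_add_one (fun i => #(P i))
    (fun i j => by have := hequitable i j; omega) (cls (.inl a))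
  rw [sum_card_eq_card_of_existsUnique_mem P hP, Fintype.card_sum, Fintype.card_fin,
    Fintype.card_fin, Fintype.card_fin] at hbound
  have hbound' : (k - 1) * (#(P (cls (.inl a))) + 1) ≤ (k - 1) * 3 :=
    Nat.mul_le_mul_left (k - 1) (Nat.add_le_add_right hsmall 1)
  omega
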